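/- If p is a prime with p ≡ 1 (mod 4), then both of the following rational numbers are ≡ 0 (mod p^3): (i) ∑_{k=0}^{p−1} ∑_{j=0}^{k} ∑_{i=0}^{k−j} ((1/4)_j^4/(j!)^4)·((1/4)_i^4/(i!)^4)·((1/4)_{k−j−i}^4/((k−j−i)!)^4)·(8i+1)(8j+1)(8(k−j−i)+1); and (ii) ∑_{k=0}^{p−1} ∑_{j=0}^{k} ∑_{i=0}^{k−j} ∑_{h=0}^{k−j−i} ((1/4)_j^4/(j!)^4)·((1/4)_i^4/(i!)^4)·((1/4)_h^4/(h!)^4)·((1/4)_{k−j−i−h}^4/((k−j−i−h)!)^4)·(8i+1)(8j+1)(8h+1)(8(k−j−i−h)+1). -/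

import Mathlib

/-- The Pochhammer symbol `(a)_k = a·(a+1)⋯(a+k-1)` for a rational `a`. -/
def poch (a : ℚ) (k : ℕ) : ℚ := ∏ j ∈ Finset.range k, (a + (j : ℚ))

/-- `A ≡ B (mod p^m)` for rationals `A`, `B`: either `A = B` or the `p`-adic
valuation of `A - B` is at least `m`. -/
def ratCongr (p : ℕ) (m : ℕ) (A B : ℚ) : Prop :=
  A = B ∨ (m : ℤ) ≤ padicValRat p (A - B)

/-!
Write `a n = quarterTerm n = ((1/4)_n / n!)^4 (8n+1)` and `p = 4m+1`; both sums are
`∑_{k<p} [x^k] f(x)^r` for `f = ∑ a n x^n` and `r = 3, 4`. All `a n` with `n < p` are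
`p`-integral, and for `m < n < p` the factor `1/4 + m = p/4` of `(1/4)_n` gives
`a n ≡ 0 (mod p^4)`. Since `r m < p`, the truncated sum is therefore
`≡ (∑_{n ≤ m} a n)^r (mod p^3)`. Modulo `p` we have `(1/4)_n ≡ (-m)_n`, so
`a n ≡ (8n+1) C(m,n)^4`, and the symmetry `n ↦ m - n` gives
`∑_{n ≤ m} (8n+1) C(m,n)^4 = p ∑_{n ≤ m} C(m,n)^4`. Hence `p ∣ ∑_{n ≤ m} a n`, and its `r`-th
power is `≡ 0 (mod p^3)`.
-/

open Finset PowerSeries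

section Ultrametric

variable {R : Type*} [NormedCommRing R] [NormOneClass R] [IsUltrametricDist R]

theorem norm_prod_sub_prod_le {ι : Type*} (s : Finset ι) {x y : ι → R} {ε : ℝ} (hε : 0 ≤ ε)
    (hx : ∀ i ∈ s, ‖x i‖ ≤ 1) (hy : ∀ i ∈ s, ‖y i‖ ≤ 1) (hxy : ∀ i ∈ s, ‖x i - y i‖ ≤ ε) :
    ‖∏ i ∈ s, x i - ∏ i ∈ s, y i‖ ≤ ε := by
  classical
  induction s using Finset.induction_on with
  | empty => simpa using hε
  | insert a s ha ih =>
    simp only [mem_insert, forall_eq_or_imp] at hx hy hxy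
    have hys : ‖∏ i ∈ s, y i‖ ≤ 1 :=
      (Finset.norm_prod_le s y).trans (prod_le_one (fun _ _ ↦ norm_nonneg _) hy.2)
    rw [prod_insert ha, prod_insert ha,
      show x a * ∏ i ∈ s, x i - y a * ∏ i ∈ s, y i
        = x a * (∏ i ∈ s, x i - ∏ i ∈ s, y i) + (x a - y a) * ∏ i ∈ s, y i by ring]
    refine (IsUltrametricDist.norm_add_le_max _ _).trans (max_le ?_ ?_)
    · calc _ ≤ ‖x a‖ * ‖∏ i ∈ s, x i - ∏ i ∈ s, y i‖ := norm_mul_le _ _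
        _ ≤ 1 * ε := mul_le_mul hx.1 (ih hx.2 hy.2 hxy.2) (norm_nonneg _) zero_le_one
        _ = ε := one_mul ε
    · calc _ ≤ ‖x a - y a‖ * ‖∏ i ∈ s, y i‖ := norm_mul_le _ _
        _ ≤ ε * 1 := mul_le_mul hxy.1 hys (norm_nonneg _) hε
        _ = ε := mul_one ε

theorem norm_pow_sub_pow_le {x y : R} {ε : ℝ} (hε : 0 ≤ ε) (hx : ‖x‖ ≤ 1) (hy : ‖y‖ ≤ 1)
    (hxy : ‖x - y‖ ≤ ε) (n : ℕ) : ‖x ^ n - y ^ n‖ ≤ ε := by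
  simpa using norm_prod_sub_prod_le (range n) hε (fun _ _ ↦ hx) (fun _ _ ↦ hy) (fun _ _ ↦ hxy)

end Ultrametric

section PowerSeries

theorem PowerSeries.map_mk {R S : Type*} [Semiring R] [Semiring S] (f : R →+* S) (A : ℕ → R) :
    map f (mk A) = mk (f ∘ A) := by
  ext n
  simp [coeff_map]

section CommSemiring

variable {R : Type*} [CommSemiring R]

theorem PowerSeries.coeff_mk_mul (A : ℕ → R) (φ : R⟦X⟧) (k : ℕ) :
    coeff k (mk A * φ) = ∑ j ∈ range (k + 1), A j * coeff (k - j) φ := by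
  rw [coeff_mul, Nat.sum_antidiagonal_eq_sum_range_succ (fun i j ↦ coeff i (mk A) * coeff j φ)]
  simp only [coeff_mk]

theorem PowerSeries.sum_coeff_trunc_pow {A : ℕ → R} {m t r : ℕ} (hrt : r * m < t) :
    ∑ k ∈ range t, coeff k ((trunc (m + 1) (mk A) : R⟦X⟧) ^ r)
      = (∑ n ∈ range (m + 1), A n) ^ r := by
  set g := trunc (m + 1) (mk A)
  have hg : g.natDegree ≤ m := Nat.lt_succ_iff.mp (natDegree_trunc_lt _ m)
  have hgr : (g ^ r).natDegree < t :=
    (Polynomial.natDegree_pow_le.trans (Nat.mul_le_mul_left r hg)).trans_lt hrt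
  have hg1 : g.eval 1 = ∑ n ∈ range (m + 1), A n := by
    rw [Polynomial.eval_eq_sum_range' (natDegree_trunc_lt _ m)]
    refine sum_congr rfl fun n hn ↦ ?_
    rw [coeff_trunc, if_pos (mem_range.mp hn), coeff_mk, one_pow, mul_one]
  rw [← hg1, ← Polynomial.eval_pow, Polynomial.eval_eq_sum_range' hgr, ← Polynomial.coe_pow]
  simp only [Polynomial.coeff_coe, one_pow, mul_one]

theorem PowerSeries.coeff_mk_pow_three (A : ℕ → R) (k : ℕ) :
    coeff k (mk A ^ 3) =
      ∑ j ∈ range (k + 1), ∑ i ∈ range (k - j + 1), A j * A i * A (k - j - i) := by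
  simp only [pow_succ', pow_zero, mul_one, coeff_mk_mul, coeff_mk, mul_sum, mul_assoc]

theorem PowerSeries.coeff_mk_pow_four (A : ℕ → R) (k : ℕ) :
    coeff k (mk A ^ 4) = ∑ j ∈ range (k + 1), ∑ i ∈ range (k - j + 1),
      ∑ h ∈ range (k - j - i + 1), A j * A i * A h * A (k - j - i - h) := by
  simp only [pow_succ', pow_zero, mul_one, coeff_mk_mul, coeff_mk, mul_sum, mul_assoc]

end CommSemiring

variable {R : Type*} [NormedCommRing R] [IsUltrametricDist R] {φ ψ : R⟦X⟧} {N : ℕ}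

theorem PowerSeries.norm_coeff_mul_le {a b : ℝ} (hφ : ∀ i < N, ‖coeff i φ‖ ≤ a)
    (hψ : ∀ i < N, ‖coeff i ψ‖ ≤ b) {n : ℕ} (hn : n < N) : ‖coeff n (φ * ψ)‖ ≤ a * b := by
  have ha : 0 ≤ a := (norm_nonneg _).trans (hφ 0 (by omega))
  rw [coeff_mul]
  refine IsUltrametricDist.norm_sum_le_of_forall_le_of_nonempty ⟨(0, n), by simp⟩
    fun ij hij ↦ ?_
  have hsum := mem_antidiagonal.mp hij
  exact (norm_mul_le _ _).trans
    (mul_le_mul (hφ _ (by omega)) (hψ _ (by omega)) (norm_nonneg _) ha)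

variable [NormOneClass R]

theorem PowerSeries.norm_coeff_pow_le_one (hφ : ∀ i < N, ‖coeff i φ‖ ≤ 1) (r : ℕ) :
    ∀ i < N, ‖coeff i (φ ^ r)‖ ≤ 1 := by
  induction r with
  | zero =>
    intro i _
    rw [pow_zero, coeff_one]
    split_ifs <;> simp
  | succ r ih => exact fun i hi ↦ (norm_coeff_mul_le ih hφ hi).trans_eq (one_mul 1)

theorem PowerSeries.norm_coeff_pow_sub_pow_le {ε : ℝ} (hφ : ∀ i < N, ‖coeff i φ‖ ≤ 1)
    (hψ : ∀ i < N, ‖coeff i ψ‖ ≤ 1) (hφψ : ∀ i < N, ‖coeff i (φ - ψ)‖ ≤ ε) (r : ℕ) :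
    ∀ i < N, ‖coeff i (φ ^ r - ψ ^ r)‖ ≤ ε := by
  induction r with
  | zero =>
    intro i hi
    simpa using (norm_nonneg _).trans (hφψ i hi)
  | succ r ih =>
    intro i hi
    rw [show φ ^ (r + 1) - ψ ^ (r + 1) = φ * (φ ^ r - ψ ^ r) + (φ - ψ) * ψ ^ r by ring,
      map_add]
    refine (IsUltrametricDist.norm_add_le_max _ _).trans (max_le ?_ ?_)
    · exact (norm_coeff_mul_le hφ ih hi).trans_eq (one_mul ε)
    · exact (norm_coeff_mul_le hφψ (norm_coeff_pow_le_one hψ r) hi).trans_eq (mul_one ε)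

theorem PowerSeries.norm_sum_coeff_mk_pow_sub_le {A : ℕ → R} {m t r : ℕ} {ε : ℝ} (hε : 0 ≤ ε)
    (hA : ∀ n < N, ‖A n‖ ≤ 1) (hAε : ∀ n, m < n → n < N → ‖A n‖ ≤ ε) (hrt : r * m < t)
    (htN : t ≤ N) :
    ‖∑ k ∈ range t, coeff k (mk A ^ r) - (∑ n ∈ range (m + 1), A n) ^ r‖ ≤ ε := by
  have hφ : ∀ i < N, ‖coeff i (mk A)‖ ≤ 1 := fun i hi ↦ by rw [coeff_mk]; exact hA i hi
  have hψ : ∀ i < N, ‖coeff i (trunc (m + 1) (mk A) : R⟦X⟧)‖ ≤ 1 := fun i hi ↦ by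
    rw [Polynomial.coeff_coe, coeff_trunc]
    split_ifs
    exacts [hφ i hi, by simp]
  have hφψ : ∀ i < N, ‖coeff i (mk A - (trunc (m + 1) (mk A) : R⟦X⟧))‖ ≤ ε := fun i hi ↦ by
    rw [map_sub, Polynomial.coeff_coe, coeff_trunc, coeff_mk]
    split_ifs
    exacts [by simpa using hε, by simpa using hAε i (by omega) hi]
  rw [← sum_coeff_trunc_pow hrt, ← sum_sub_distrib]
  exact IsUltrametricDist.norm_sum_le_of_forall_le_of_nonneg hε fun k hk ↦ by
    rw [← map_sub]
    exact norm_coeff_pow_sub_pow_le hφ hψ hφψ r k ((mem_range.mp hk).trans_le htN)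

end PowerSeries

open Nat in
theorem poch_neg_natCast (m n : ℕ) : poch (-m) n = (-1) ^ n * n ! * m.choose n := by
  have h : poch (-m) n = (-1) ^ n * ∏ j ∈ range n, ((m : ℚ) - j) := by
    calc poch (-m) n = ∏ j ∈ range n, (-1) * ((m : ℚ) - j) := prod_congr rfl fun j _ ↦ by ring
      _ = _ := by rw [← pow_card_mul_prod, card_range]
  rw [h, ← descPochhammer_eval_eq_prod_range, descPochhammer_eval_eq_descFactorial,
    Nat.descFactorial_eq_factorial_mul_choose]
  push_cast
  ring

theorem Nat.two_mul_sum_range_mul_choose_pow (m k : ℕ) :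
    2 * ∑ n ∈ range (m + 1), n * m.choose n ^ k = m * ∑ n ∈ range (m + 1), m.choose n ^ k := by
  rw [two_mul]
  nth_rewrite 1 [← sum_range_reflect]
  rw [← sum_add_distrib, mul_sum]
  refine sum_congr rfl fun n hn ↦ ?_
  have hnm : n ≤ m := Nat.lt_succ_iff.mp (mem_range.mp hn)
  rw [Nat.add_sub_cancel, Nat.choose_symm hnm, ← add_mul, Nat.sub_add_cancel hnm]

theorem Rat.cast_poch {K : Type*} [Field K] [CharZero K] (a : ℚ) (n : ℕ) :
    ((poch a n : ℚ) : K) = ∏ j ∈ range n, ((a : K) + j) := by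
  push_cast [poch]
  rfl

open Nat in
def quarterBinom (n : ℕ) : ℚ := poch (1 / 4) n / n !

def quarterTerm (n : ℕ) : ℚ := quarterBinom n ^ 4 * (8 * n + 1)

section Padic

variable {p : ℕ} [hp : Fact p.Prime]

open Nat in
theorem Padic.norm_factorial_eq_one {n : ℕ} (hn : n < p) : ‖(n ! : ℚ_[p])‖ = 1 :=
  norm_natCast_eq_one_iff.mpr ((Nat.Prime.coprime_iff_not_dvd hp.out).mpr
    fun h ↦ absurd ((Nat.Prime.dvd_factorial hp.out).mp h) (by omega))

theorem Padic.norm_four_eq_one (hp2 : p ≠ 2) : ‖(4 : ℚ_[p])‖ = 1 := by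
  have h2 : p.Coprime 2 := (Nat.coprime_primes hp.out Nat.prime_two).mpr hp2
  exact_mod_cast norm_natCast_eq_one_iff.mpr (h2.pow_right 2)

theorem Padic.norm_p_div_four (hp2 : p ≠ 2) : ‖(p / 4 : ℚ_[p])‖ = (p : ℝ)⁻¹ := by
  rw [norm_div, norm_p, norm_four_eq_one hp2, div_one]

variable {m : ℕ}

theorem Padic.quarter_add_natCast (hpm : p = 4 * m + 1) (j : ℕ) :
    (1 / 4 : ℚ_[p]) + j = p / 4 + ((j - m : ℤ) : ℚ_[p]) := by
  push_cast [hpm]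
  ring

theorem Padic.norm_quarter_add_natCast_le_one (hpm : p = 4 * m + 1) (j : ℕ) :
    ‖(1 / 4 : ℚ_[p]) + j‖ ≤ 1 := by
  rw [quarter_add_natCast hpm]
  refine (IsUltrametricDist.norm_add_le_max _ _).trans (max_le ?_ (norm_int_le_one _))
  rw [norm_p_div_four (by omega)]
  exact inv_le_one_of_one_le₀ (by exact_mod_cast hp.out.one_lt.le)

theorem Padic.norm_poch_quarter_le_one (hpm : p = 4 * m + 1) (n : ℕ) :
    ‖((poch (1 / 4) n : ℚ) : ℚ_[p])‖ ≤ 1 := by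
  rw [Rat.cast_poch, norm_prod]
  push_cast
  exact prod_le_one (fun _ _ ↦ norm_nonneg _) fun j _ ↦ norm_quarter_add_natCast_le_one hpm j

theorem Padic.norm_poch_quarter_le (hpm : p = 4 * m + 1) {n : ℕ} (hmn : m < n) :
    ‖((poch (1 / 4) n : ℚ) : ℚ_[p])‖ ≤ (p : ℝ)⁻¹ := by
  rw [Rat.cast_poch, norm_prod, ← mul_prod_erase _ _ (mem_range.mpr hmn)]
  push_cast
  rw [quarter_add_natCast hpm m, sub_self, Int.cast_zero, add_zero, norm_p_div_four (by omega)]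
  exact mul_le_of_le_one_right (by positivity) <|
    prod_le_one (fun _ _ ↦ norm_nonneg _) fun j _ ↦ norm_quarter_add_natCast_le_one hpm j

theorem Padic.norm_poch_quarter_sub_poch_neg_le (hpm : p = 4 * m + 1) (n : ℕ) :
    ‖((poch (1 / 4) n : ℚ) : ℚ_[p]) - ((poch (-m) n : ℚ) : ℚ_[p])‖ ≤ (p : ℝ)⁻¹ := by
  rw [Rat.cast_poch, Rat.cast_poch]
  push_cast
  refine norm_prod_sub_prod_le _ (by positivity)
    (fun j _ ↦ norm_quarter_add_natCast_le_one hpm j) (fun j _ ↦ ?_) (fun j _ ↦ ?_)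
  · exact_mod_cast norm_int_le_one (p := p) (-m + j)
  · rw [quarter_add_natCast hpm, ← norm_p_div_four (by omega)]
    exact le_of_eq (congrArg _ (by push_cast; ring))

theorem Padic.norm_quarterBinom {n : ℕ} (hn : n < p) :
    ‖(quarterBinom n : ℚ_[p])‖ = ‖((poch (1 / 4) n : ℚ) : ℚ_[p])‖ := by
  push_cast [quarterBinom]
  rw [norm_div, norm_factorial_eq_one hn, div_one]

theorem Padic.norm_quarterBinom_sub_le (hpm : p = 4 * m + 1) {n : ℕ} (hn : n < p) :
    ‖(quarterBinom n : ℚ_[p]) - (-1) ^ n * m.choose n‖ ≤ (p : ℝ)⁻¹ := by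
  have hfac : (n.factorial : ℚ_[p]) ≠ 0 := by exact_mod_cast n.factorial_ne_zero
  have hneg : ((-1) ^ n * m.choose n : ℚ_[p]) = ((poch (-m) n : ℚ) : ℚ_[p]) / n.factorial := by
    rw [poch_neg_natCast]
    push_cast
    field_simp
  push_cast [quarterBinom, hneg]
  rw [← sub_div, norm_div, norm_factorial_eq_one hn, div_one]
  exact_mod_cast norm_poch_quarter_sub_poch_neg_le hpm n

theorem Padic.norm_quarterTerm_le (n : ℕ) :
    ‖(quarterTerm n : ℚ_[p])‖ ≤ ‖(quarterBinom n : ℚ_[p])‖ ^ 4 := by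
  push_cast [quarterTerm]
  rw [norm_mul, norm_pow]
  exact mul_le_of_le_one_right (by positivity) (by exact_mod_cast norm_int_le_one (8 * n + 1))

theorem Padic.norm_sum_quarterTerm_le (hpm : p = 4 * m + 1) :
    ‖∑ n ∈ range (m + 1), (quarterTerm n : ℚ_[p])‖ ≤ (p : ℝ)⁻¹ := by
  have hp0 : (0 : ℝ) ≤ (p : ℝ)⁻¹ := by positivity
  have hreduced : ∑ n ∈ range (m + 1), (8 * n + 1) * m.choose n ^ 4
      = p * ∑ n ∈ range (m + 1), m.choose n ^ 4 := by
    rw [hpm, add_mul, one_mul, mul_assoc, ← Nat.two_mul_sum_range_mul_choose_pow, mul_sum, mul_sum,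
      ← sum_add_distrib]
    exact sum_congr rfl fun n _ ↦ by ring
  have hsplit : ∑ n ∈ range (m + 1), (quarterTerm n : ℚ_[p])
      = ∑ n ∈ range (m + 1), ((quarterBinom n : ℚ_[p]) ^ 4 - ((-1) ^ n * m.choose n) ^ 4)
          * (8 * n + 1) + (p : ℚ_[p]) * ((∑ n ∈ range (m + 1), m.choose n ^ 4 : ℕ) : ℚ_[p]) := by
    rw [← Nat.cast_mul, ← hreduced]
    push_cast [quarterTerm]
    rw [← sum_add_distrib]
    refine sum_congr rfl fun n _ ↦ ?_
    rw [mul_pow, ← pow_mul, mul_comm n 4, pow_mul, (by norm_num : (-1 : ℚ_[p]) ^ 4 = 1), one_pow]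
    ring
  rw [hsplit]
  refine (IsUltrametricDist.norm_add_le_max _ _).trans (max_le ?_ ?_)
  · refine IsUltrametricDist.norm_sum_le_of_forall_le_of_nonneg hp0 fun n hn ↦ ?_
    have hnp : n < p := by have := mem_range.mp hn; omega
    rw [norm_mul]
    refine (mul_le_of_le_one_right (norm_nonneg _) ?_).trans ?_
    · exact_mod_cast norm_int_le_one (p := p) (8 * n + 1)
    refine norm_pow_sub_pow_le hp0 ?_ ?_ (norm_quarterBinom_sub_le hpm hnp) 4
    · exact (norm_quarterBinom hnp).trans_le (norm_poch_quarter_le_one hpm n)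
    · exact_mod_cast norm_int_le_one ((-1) ^ n * m.choose n)
  · rw [norm_mul, norm_p]
    exact mul_le_of_le_one_right hp0 (by exact_mod_cast norm_int_le_one _)

theorem Padic.norm_sum_coeff_quarterTerm_pow_le (hpm : p = 4 * m + 1) {r : ℕ} (hr : 3 ≤ r)
    (hrm : r * m < p) :
    ‖∑ k ∈ range p, coeff k (PowerSeries.mk (fun n ↦ (quarterTerm n : ℚ_[p])) ^ r)‖
      ≤ (p : ℝ)⁻¹ ^ 3 := by
  have hp1 : (p : ℝ)⁻¹ ≤ 1 := inv_le_one_of_one_le₀ (by exact_mod_cast hp.out.one_lt.le)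
  have hp0 : (0 : ℝ) ≤ (p : ℝ)⁻¹ := by positivity
  have hsmall : ∀ n, m < n → n < p → ‖(quarterTerm n : ℚ_[p])‖ ≤ (p : ℝ)⁻¹ ^ 3 := fun n hmn hn ↦
    calc ‖(quarterTerm n : ℚ_[p])‖ ≤ ‖(quarterBinom n : ℚ_[p])‖ ^ 4 := norm_quarterTerm_le n
      _ ≤ (p : ℝ)⁻¹ ^ 4 := by
        rw [norm_quarterBinom hn]
        exact pow_le_pow_left₀ (norm_nonneg _) (norm_poch_quarter_le hpm hmn) 4
      _ ≤ (p : ℝ)⁻¹ ^ 3 := pow_le_pow_of_le_one hp0 hp1 (by norm_num)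
  have hbound : ∀ n < p, ‖(quarterTerm n : ℚ_[p])‖ ≤ 1 := fun n hn ↦
    (norm_quarterTerm_le n).trans <| pow_le_one₀ (norm_nonneg _) <|
      (norm_quarterBinom hn).trans_le (norm_poch_quarter_le_one hpm n)
  have hpow : ‖(∑ n ∈ range (m + 1), (quarterTerm n : ℚ_[p])) ^ r‖ ≤ (p : ℝ)⁻¹ ^ 3 := by
    rw [norm_pow]
    exact (pow_le_pow_left₀ (norm_nonneg _) (norm_sum_quarterTerm_le hpm) r).trans
      (pow_le_pow_of_le_one hp0 hp1 hr)
  rw [← sub_add_cancel (∑ k ∈ range p, _) ((∑ n ∈ range (m + 1), (quarterTerm n : ℚ_[p])) ^ r)]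
  exact (IsUltrametricDist.norm_add_le_max _ _).trans (max_le
    (norm_sum_coeff_mk_pow_sub_le (by positivity) hbound hsmall hrm le_rfl) hpow)

end Padic

theorem ratCongr_zero_of_norm_le {p : ℕ} [hp : Fact p.Prime] {q : ℚ} {k : ℕ}
    (h : ‖(q : ℚ_[p])‖ ≤ (p : ℝ)⁻¹ ^ k) : ratCongr p k q 0 := by
  rcases eq_or_ne q 0 with hq | hq
  · exact Or.inl hq
  right
  have hp1 : (1 : ℝ) < p := by exact_mod_cast hp.out.one_lt
  rw [Padic.eq_padicNorm, padicNorm.eq_zpow_of_nonzero hq, inv_pow, ← zpow_natCast, ← zpow_neg] at h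
  push_cast at h
  rw [sub_zero]
  linarith [(zpow_le_zpow_iff_right₀ hp1).mp h]

theorem ratCongr_sum_coeff_quarterTerm_pow {p m : ℕ} [Fact p.Prime] (hpm : p = 4 * m + 1) {r : ℕ}
    (hr : 3 ≤ r) (hrm : r * m < p) :
    ratCongr p 3 (∑ k ∈ range p, coeff k (mk quarterTerm ^ r)) 0 := by
  refine ratCongr_zero_of_norm_le ?_
  rw [Rat.cast_sum]
  simp only [← Rat.coe_castHom, ← coeff_map, map_pow, map_mk]
  exact Padic.norm_sum_coeff_quarterTerm_pow_le hpm hr hrm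

theorem stmt_15 (p : ℕ) (hp : p.Prime) (hmod : p % 4 = 1) :
    ratCongr p 3
      (∑ k ∈ Finset.range p, ∑ j ∈ Finset.range (k + 1), ∑ i ∈ Finset.range (k - j + 1),
        ((poch (1/4) (j)) ^ 4 / ((j).factorial : ℚ) ^ 4) *
          ((poch (1/4) (i)) ^ 4 / ((i).factorial : ℚ) ^ 4) *
          ((poch (1/4) (k - j - i)) ^ 4 / ((k - j - i).factorial : ℚ) ^ 4) *
          (8 * ((i : ℕ) : ℚ) + 1) * (8 * ((j : ℕ) : ℚ) + 1) * (8 * ((k - j - i : ℕ) : ℚ) + 1))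
      0 ∧
    ratCongr p 3
      (∑ k ∈ Finset.range p, ∑ j ∈ Finset.range (k + 1), ∑ i ∈ Finset.range (k - j + 1),
        ∑ h ∈ Finset.range (k - j - i + 1),
        ((poch (1/4) (j)) ^ 4 / ((j).factorial : ℚ) ^ 4) *
          ((poch (1/4) (i)) ^ 4 / ((i).factorial : ℚ) ^ 4) *
          ((poch (1/4) (h)) ^ 4 / ((h).factorial : ℚ) ^ 4) *
          ((poch (1/4) (k - j - i - h)) ^ 4 / ((k - j - i - h).factorial : ℚ) ^ 4) *
          (8 * ((i : ℕ) : ℚ) + 1) * (8 * ((j : ℕ) : ℚ) + 1) * (8 * ((h : ℕ) : ℚ) + 1) * (8 * ((k - j - i - h : ℕ) : ℚ) + 1))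
      0 := by
  have : Fact p.Prime := ⟨hp⟩
  obtain ⟨m, hpm⟩ : ∃ m, p = 4 * m + 1 := ⟨p / 4, by omega⟩
  constructor
  · convert ratCongr_sum_coeff_quarterTerm_pow hpm le_rfl (by omega : 3 * m < p)
      using 3 with k
    rw [coeff_mk_pow_three]
    refine sum_congr rfl fun j _ ↦ sum_congr rfl fun i _ ↦ ?_
    simp only [quarterTerm, quarterBinom]
    ring
  · convert ratCongr_sum_coeff_quarterTerm_pow hpm (by norm_num) (by omega : 4 * m < p)
      using 3 with k
    rw [coeff_mk_pow_four]
    refine sum_congr rfl fun j _ ↦ sum_congr rfl fun i _ ↦ sum_congr rfl fun h _ ↦ ?_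
    simp only [quarterTerm, quarterBinom]
    ring
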